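/- Under the NormalHedge dynamics, suppose that for some round t₀ and some constant 0 < δ ≤ 1/2 one has c_{t₀} ≥ (16 ln N)/δ². Then for every round t ≥ t₀, c_{t+1} − c_t ≤ e^δ(3/2 + δ + ln N)/(1 − δ² e^δ). (Lemma 5.) -/

import Mathlib

/-!
The potential `Φ_c(z) = exp([z]₊² / (2c))` is convex in `z` and strictly decreasing in `c`, and
`c_t` is the scale at which `Σᵢ Φ_{c_t}(R_{i,t}) = N e`. The weights `p_{t+1}` are proportional
to `Φ'_{c_t}(R_{·,t})`, so the first-order change of `Σᵢ Φ_{c_t}` in round `t + 1` vanishes. By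
convexity the potential at scale `c_t` then stays at least `N e`, whence `c_t ≤ c_{t+1}`, and the
hypothesis on `c_{t₀}` persists for all `t ≥ t₀`. In that regime `[R_{i,t}]₊ ≤ (3/4) δ c_t`, which
bounds `Φ''` along each step of length at most one and gives
`Σᵢ Φ_{c_t}(R_{i,t+1}) ≤ N e (1 + ε)` with `ε = e^δ (3/2 + δ + ln N) / c_t`. Convexity of `exp`
turns this into `Σᵢ Φ_{c_t (1 + ε)}(R_{i,t+1}) ≤ N e`, so `c_{t+1} ≤ c_t + e^δ (3/2 + δ + ln N)`,
which is below the claimed bound because `0 < 1 - δ² e^δ ≤ 1`.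
-/

open Real Finset Filter

/-- The NormalHedge dynamics with `N` actions.  Rounds are indexed by `t = 1, 2, …`;
`loss i t` is the loss of action `i` in round `t`, `p i t` its weight in round `t`,
`R i t` its cumulative regret after `t` rounds, and `c t` the scale parameter. -/
structure NormalHedge (N : ℕ) where
  hN : 2 ≤ N
  loss : Fin N → ℕ → ℝ
  p : Fin N → ℕ → ℝ
  R : Fin N → ℕ → ℝ
  c : ℕ → ℝ
  loss_mem : ∀ i t, 1 ≤ t → loss i t ∈ Set.Icc (0 : ℝ) 1
  p_one : ∀ i, p i 1 = 1 / N
  R_zero : ∀ i, R i 0 = 0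
  R_rec : ∀ i t, R i (t + 1) = R i t + ((∑ j, p j (t + 1) * loss j (t + 1)) - loss i (t + 1))
  c_pos : ∀ t, 1 ≤ t → 0 < c t
  c_eq : ∀ t, 1 ≤ t →
    (1 / N : ℝ) * ∑ i, Real.exp (max (R i t) 0 ^ 2 / (2 * c t)) = Real.exp 1
  p_rec : ∀ i t, 1 ≤ t →
    p i (t + 1) = (max (R i t) 0 / c t) * Real.exp (max (R i t) 0 ^ 2 / (2 * c t)) /
      ∑ j, (max (R j t) 0 / c t) * Real.exp (max (R j t) 0 ^ 2 / (2 * c t))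

open Set

theorem hasDerivAt_max_zero_sq (z : ℝ) :
    HasDerivAt (fun w : ℝ => max w 0 ^ 2) (2 * max z 0) z := by
  refine hasDerivAt_of_hasDerivAt_of_ne' (x := 0) (g := fun w => 2 * max w 0) (fun y hy => ?_)
    (Continuous.continuousAt (by fun_prop)) (Continuous.continuousAt (by fun_prop)) z
  rcases hy.lt_or_gt with hy | hy
  · rw [max_eq_right hy.le, mul_zero]
    refine (hasDerivAt_const y (0 : ℝ)).congr_of_eventuallyEq ?_
    filter_upwards [eventually_lt_nhds hy] with w hw
    simp [max_eq_right hw.le]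
  · rw [max_eq_left hy.le]
    refine ((hasDerivAt_pow 2 y).congr_deriv (by ring)).congr_of_eventuallyEq ?_
    filter_upwards [eventually_gt_nhds hy] with w hw
    rw [max_eq_left hw.le]

theorem le_add_sub_mul_add_sq_of_deriv_sub_le {f f' : ℝ → ℝ} {a b K : ℝ}
    (hf : ∀ x, HasDerivAt f (f' x) x)
    (hf' : ∀ x ∈ uIcc a b, ∀ y ∈ uIcc a b, x ≤ y → f' y - f' x ≤ K * (y - x)) :
    f b ≤ f a + (b - a) * f' a + K / 2 * (b - a) ^ 2 := by
  set g : ℝ → ℝ := fun s => f a + (s - a) * f' a + K / 2 * (s - a) ^ 2 - f s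
  have hg : ∀ s, HasDerivAt g (f' a + K * (s - a) - f' s) s := fun s => by
    have := ((((hasDerivAt_id s).sub_const a).mul_const (f' a)).const_add (f a)).add
      ((((hasDerivAt_id s).sub_const a).pow 2).const_mul (K / 2)) |>.sub (hf s)
    exact this.congr_deriv (by simp only [id_eq]; ring)
  have hg_cont : Continuous g := continuous_iff_continuousAt.2 fun s => (hg s).continuousAt
  suffices g a ≤ g b by simpa [g] using this
  rcases le_total a b with hab | hba
  · refine monotoneOn_of_hasDerivWithinAt_nonneg (convex_Icc a b) hg_cont.continuousOn
      (fun s _ => (hg s).hasDerivWithinAt) (fun s hs => ?_) (left_mem_Icc.2 hab)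
      (right_mem_Icc.2 hab) hab
    rw [interior_Icc] at hs
    have := hf' a left_mem_uIcc s (uIcc_of_le hab ▸ Ioo_subset_Icc_self hs) hs.1.le
    linarith
  · refine antitoneOn_of_hasDerivWithinAt_nonpos (convex_Icc b a) hg_cont.continuousOn
      (fun s _ => (hg s).hasDerivWithinAt) (fun s hs => ?_) (left_mem_Icc.2 hba)
      (right_mem_Icc.2 hba) hba
    rw [interior_Icc] at hs
    have := hf' s (uIcc_of_ge hba ▸ Ioo_subset_Icc_self hs) a left_mem_uIcc hs.2.le
    linarith

theorem add_sub_mul_le_of_monotone_deriv {f f' : ℝ → ℝ} (hf : ∀ x, HasDerivAt f (f' x) x)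
    (hf' : Monotone f') (a b : ℝ) : f a + (b - a) * f' a ≤ f b := by
  have := le_add_sub_mul_add_sq_of_deriv_sub_le (a := a) (b := b) (K := 0)
    (fun x => (hf x).neg) fun x _ y _ hxy => by linarith [hf' hxy]
  simp only [Pi.neg_apply] at this
  linarith

theorem sum_exp_mul_le_of_mul_sum_exp_le {ι : Type*} [Fintype ι] (v : ι → ℝ) {θ : ℝ}
    (hθ0 : 0 < θ) (hθ1 : θ ≤ 1) (h : θ * ∑ i, exp (v i) ≤ Fintype.card ι * exp 1) :
    ∑ i, exp (θ * v i) ≤ Fintype.card ι * exp 1 := by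
  have hpt (i : ι) : exp (θ * v i) ≤ (1 - θ) * exp θ + exp (θ - 1) * (θ * exp (v i)) :=
    calc exp (θ * v i) = exp ((1 - θ) * θ + θ * (θ - 1 + v i)) := by ring_nf
      _ ≤ (1 - θ) * exp θ + θ * exp (θ - 1 + v i) :=
        convexOn_exp.2 (mem_univ θ) (mem_univ _) (sub_nonneg.2 hθ1) hθ0.le (by ring)
      _ = (1 - θ) * exp θ + exp (θ - 1) * (θ * exp (v i)) := by rw [exp_add]; ring
  calc ∑ i, exp (θ * v i)
      ≤ ∑ i, ((1 - θ) * exp θ + exp (θ - 1) * (θ * exp (v i))) := sum_le_sum fun i _ => hpt i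
    _ = Fintype.card ι * ((1 - θ) * exp θ) + exp (θ - 1) * (θ * ∑ i, exp (v i)) := by
      rw [sum_add_distrib, sum_const, card_univ, nsmul_eq_mul, ← mul_sum, ← mul_sum]
    _ ≤ Fintype.card ι * ((1 - θ) * exp θ) + exp (θ - 1) * (Fintype.card ι * exp 1) := by
      gcongr
    _ = Fintype.card ι * (exp θ * (2 - θ)) := by
      rw [exp_sub]; field_simp; ring
    _ ≤ Fintype.card ι * (exp θ * exp (1 - θ)) := by
      gcongr; linarith [add_one_le_exp (1 - θ)]
    _ = Fintype.card ι * exp 1 := by rw [← exp_add, add_sub_cancel]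

theorem sq_mul_exp_lt_one {δ : ℝ} (hδ0 : 0 ≤ δ) (hδ1 : δ ≤ 1 / 2) : δ ^ 2 * exp δ < 1 := by
  have hexp : exp δ < 3 :=
    (exp_le_exp.2 (hδ1.trans (by norm_num))).trans_lt (exp_one_lt_d9.trans (by norm_num))
  have hδsq : δ ^ 2 ≤ 1 / 4 := by nlinarith
  nlinarith [exp_pos δ]

namespace NormalHedge

/- The paper's `w_{i,t}` is `weight (c t) (R i t)`, the derivative of `potential (c t)` at
`R i t`. On `x ≥ 0`, `weight c x = x / c * exp (x ^ 2 / (2 * c))`, whose derivative is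
`weightDeriv c x`. -/
noncomputable def potential (c z : ℝ) : ℝ := exp (max z 0 ^ 2 / (2 * c))

noncomputable def weight (c z : ℝ) : ℝ := max z 0 / c * exp (max z 0 ^ 2 / (2 * c))

noncomputable def weightDeriv (c x : ℝ) : ℝ := (1 / c + x ^ 2 / c ^ 2) * exp (x ^ 2 / (2 * c))

section Potential

variable {c : ℝ}

theorem hasDerivAt_potential (hc : c ≠ 0) (z : ℝ) : HasDerivAt (potential c) (weight c z) z :=
  ((hasDerivAt_max_zero_sq z).div_const (2 * c)).exp.congr_deriv (by
    unfold weight; field_simp)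

theorem hasDerivAt_div_mul_exp_sq_div (hc : c ≠ 0) (x : ℝ) :
    HasDerivAt (fun x => x / c * exp (x ^ 2 / (2 * c))) (weightDeriv c x) x :=
  ((hasDerivAt_id x).div_const c).mul (((hasDerivAt_pow 2 x).div_const (2 * c)).exp)
    |>.congr_deriv (by unfold weightDeriv; simp only [id]; field_simp; ring)

theorem weight_nonneg (hc : 0 < c) (z : ℝ) : 0 ≤ weight c z := by
  unfold weight
  have := le_max_right z 0
  positivity

theorem monotone_weight (hc : 0 < c) : Monotone (weight c) := fun w z hwz => by
  have hw : 0 ≤ max w 0 := le_max_right w 0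
  have hwz' : max w 0 ≤ max z 0 := max_le_max_right 0 hwz
  unfold weight
  gcongr

theorem weightDeriv_nonneg (hc : 0 < c) (x : ℝ) : 0 ≤ weightDeriv c x := by
  unfold weightDeriv
  positivity

theorem weightDeriv_le_weightDeriv (hc : 0 < c) {x y : ℝ} (hx : 0 ≤ x) (hxy : x ≤ y) :
    weightDeriv c x ≤ weightDeriv c y := by
  unfold weightDeriv
  gcongr

theorem weight_sub_weight_le (hc : 0 < c) {w z B : ℝ} (hwz : w ≤ z) (hzB : max z 0 ≤ B) :
    weight c z - weight c w ≤ weightDeriv c B * (z - w) := by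
  have hB : 0 ≤ B := (le_max_right z 0).trans hzB
  have hmem : ∀ {y}, max y 0 ≤ B → max y 0 ∈ Icc 0 B := fun h => ⟨le_max_right _ 0, h⟩
  have hmvt := (convex_Icc 0 B).image_sub_le_mul_sub_of_deriv_le
    (fun x _ => (hasDerivAt_div_mul_exp_sq_div hc.ne' x).continuousAt.continuousWithinAt)
    (fun x _ => (hasDerivAt_div_mul_exp_sq_div hc.ne' x).differentiableAt.differentiableWithinAt)
    (fun x hx => by
      rw [interior_Icc] at hx
      rw [(hasDerivAt_div_mul_exp_sq_div hc.ne' x).deriv]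
      exact weightDeriv_le_weightDeriv hc hx.1.le hx.2.le)
    _ (hmem ((max_le_max_right 0 hwz).trans hzB)) _ (hmem hzB) (max_le_max_right 0 hwz)
  have hpos : max z 0 - max w 0 ≤ z - w :=
    (max_sub_max_le_max z 0 w 0).trans (by rw [sub_zero, max_eq_left (sub_nonneg.2 hwz)])
  calc weight c z - weight c w ≤ weightDeriv c B * (max z 0 - max w 0) := hmvt
    _ ≤ weightDeriv c B * (z - w) := by gcongr; exact weightDeriv_nonneg hc B

theorem add_sub_mul_weight_le_potential (hc : 0 < c) (a b : ℝ) :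
    potential c a + (b - a) * weight c a ≤ potential c b :=
  add_sub_mul_le_of_monotone_deriv (hasDerivAt_potential hc.ne') (monotone_weight hc) a b

theorem potential_le_of_abs_sub_le_one (hc : 0 < c) {a b : ℝ} (hab : |b - a| ≤ 1) :
    potential c b ≤ potential c a + (b - a) * weight c a + weightDeriv c (max a 0 + 1) / 2 := by
  have hK := weightDeriv_nonneg hc (max a 0 + 1)
  have htaylor := le_add_sub_mul_add_sq_of_deriv_sub_le (hasDerivAt_potential hc.ne')
    (K := weightDeriv c (max a 0 + 1)) fun x _ y hy hxy => by
      refine weight_sub_weight_le hc hxy (max_le ?_ (by positivity))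
      have : y ≤ a + 1 := by
        rcases le_total a b with h | h
        · rw [uIcc_of_le h] at hy; linarith [hy.2, (abs_le.1 hab).2]
        · rw [uIcc_of_ge h] at hy; linarith [hy.2]
      linarith [le_max_left a 0]
  have hsq : (b - a) ^ 2 ≤ 1 := (sq_le_one_iff_abs_le_one _).2 hab
  nlinarith

theorem weightDeriv_add_one_le {δ L x : ℝ} (hc : 0 < c) (hx : 0 ≤ x)
    (hxL : x ^ 2 / (2 * c) ≤ 1 + L) (hxδ : 2 * x + 1 ≤ 2 * δ * c) :
    weightDeriv c (x + 1) / 2 ≤ exp δ * (3 / 2 + δ + L) / c * exp (x ^ 2 / (2 * c)) := by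
  have hshift : (x + 1) ^ 2 / (2 * c) ≤ x ^ 2 / (2 * c) + δ := by
    rw [div_add' _ _ _ (by positivity), div_le_div_iff_of_pos_right (by positivity)]
    nlinarith
  have hexp : exp ((x + 1) ^ 2 / (2 * c)) ≤ exp δ * exp (x ^ 2 / (2 * c)) := by
    rw [← exp_add]; exact exp_le_exp.2 (by linarith)
  have hcoef : 1 / c + (x + 1) ^ 2 / c ^ 2 ≤ 2 * (3 / 2 + δ + L) / c := by
    have : (x + 1) ^ 2 / c ^ 2 = 2 * ((x + 1) ^ 2 / (2 * c)) / c := by field_simp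
    rw [this, ← add_div, div_le_div_iff_of_pos_right hc]
    linarith
  calc weightDeriv c (x + 1) / 2
      ≤ 2 * (3 / 2 + δ + L) / c * (exp δ * exp (x ^ 2 / (2 * c))) / 2 := by
        unfold weightDeriv
        gcongr
        exact le_trans (by positivity) hcoef
    _ = exp δ * (3 / 2 + δ + L) / c * exp (x ^ 2 / (2 * c)) := by ring

theorem sum_potential_strictAntiOn {ι : Type*} [Fintype ι] {x : ι → ℝ} (hx : ∃ i, 0 < x i) :
    StrictAntiOn (fun c => ∑ i, potential c (x i)) (Ioi 0) := by
  intro c (hc : 0 < c) c' _ hcc'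
  obtain ⟨j, hj⟩ := hx
  refine sum_lt_sum (fun i _ => ?_) ⟨j, mem_univ j, ?_⟩
  · unfold potential
    gcongr
  · unfold potential
    rw [max_eq_left hj.le]
    gcongr

end Potential

theorem two_mul_add_one_le_of_sq_div_le {c δ L x : ℝ} (hL : log 2 ≤ L) (hδ0 : 0 < δ)
    (hδ1 : δ ≤ 1 / 2) (hcL : 16 * L / δ ^ 2 ≤ c) (hx : 0 ≤ x) (hxL : x ^ 2 / (2 * c) ≤ 1 + L) :
    2 * x + 1 ≤ 2 * δ * c := by
  have hL' : 0.69 < L := lt_of_lt_of_le (by linarith [log_two_gt_d9]) hL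
  have hcL' : 16 * L ≤ δ ^ 2 * c := by rw [div_le_iff₀ (by positivity)] at hcL; linarith
  have hc : 0 < c := pos_of_mul_pos_right (by linarith) (sq_nonneg δ)
  have hδc : 2 ≤ δ * c := by nlinarith
  have hx_le : x ≤ 3 / 4 * δ * c := by
    rw [div_le_iff₀ (by positivity)] at hxL
    nlinarith
  linarith

theorem natCast_pos {N : ℕ} (H : NormalHedge N) : (0 : ℝ) < N :=
  Nat.cast_pos.2 (by have := H.hN; omega)

theorem log_two_le_log_card {N : ℕ} (H : NormalHedge N) : log 2 ≤ log N :=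
  log_le_log two_pos (by exact_mod_cast H.hN)

theorem log_card_nonneg {N : ℕ} (H : NormalHedge N) : 0 ≤ log N :=
  (Real.log_nonneg one_le_two).trans H.log_two_le_log_card

variable {N : ℕ} (H : NormalHedge N)

theorem sum_potential_eq {t : ℕ} (ht : 1 ≤ t) :
    ∑ i, potential (H.c t) (H.R i t) = N * exp 1 := by
  have h := H.c_eq t ht
  rw [one_div, inv_mul_eq_iff_eq_mul₀ H.natCast_pos.ne'] at h
  exact h

theorem exists_regret_pos {t : ℕ} (ht : 1 ≤ t) : ∃ j, 0 < H.R j t := by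
  by_contra! h
  have hsum := H.sum_potential_eq ht
  simp only [potential, max_eq_right (h _), sq, mul_zero, zero_div, exp_zero, sum_const,
    card_univ, Fintype.card_fin, nsmul_eq_mul, mul_one] at hsum
  have := H.natCast_pos
  have : (1 : ℝ) < exp 1 := one_lt_exp_iff.2 one_pos
  nlinarith

theorem sum_weight_pos {t : ℕ} (ht : 1 ≤ t) : 0 < ∑ j, weight (H.c t) (H.R j t) := by
  obtain ⟨j, hj⟩ := H.exists_regret_pos ht
  have hc := H.c_pos t ht
  refine sum_pos' (fun i _ => weight_nonneg hc _) ⟨j, mem_univ j, ?_⟩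
  unfold weight
  rw [max_eq_left hj.le]
  positivity

theorem p_succ_eq {t : ℕ} (ht : 1 ≤ t) (i : Fin N) :
    H.p i (t + 1) = weight (H.c t) (H.R i t) / ∑ j, weight (H.c t) (H.R j t) :=
  H.p_rec i t ht

theorem abs_R_succ_sub_le_one {t : ℕ} (ht : 1 ≤ t) (i : Fin N) :
    |H.R i (t + 1) - H.R i t| ≤ 1 := by
  have hW := H.sum_weight_pos ht
  have hp (j : Fin N) : 0 ≤ H.p j (t + 1) := by
    rw [H.p_succ_eq ht]; exact div_nonneg (weight_nonneg (H.c_pos t ht) _) hW.le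
  have hp1 : ∑ j, H.p j (t + 1) = 1 := by
    simp_rw [H.p_succ_eq ht, ← sum_div, div_self hW.ne']
  have hl (j : Fin N) := H.loss_mem j (t + 1) (by omega)
  have hA0 : 0 ≤ ∑ j, H.p j (t + 1) * H.loss j (t + 1) :=
    sum_nonneg fun j _ => mul_nonneg (hp j) (hl j).1
  have hA1 : ∑ j, H.p j (t + 1) * H.loss j (t + 1) ≤ 1 :=
    calc ∑ j, H.p j (t + 1) * H.loss j (t + 1) ≤ ∑ j, H.p j (t + 1) :=
          sum_le_sum fun j _ => mul_le_of_le_one_right (hp j) (hl j).2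
      _ = 1 := hp1
  rw [H.R_rec, add_sub_cancel_left, abs_le]
  constructor <;> linarith [(hl i).1, (hl i).2]

theorem sum_R_succ_sub_mul_weight {t : ℕ} (ht : 1 ≤ t) :
    ∑ i, (H.R i (t + 1) - H.R i t) * weight (H.c t) (H.R i t) = 0 := by
  have hW := H.sum_weight_pos ht
  have hA : (∑ j, H.p j (t + 1) * H.loss j (t + 1)) * ∑ j, weight (H.c t) (H.R j t) =
      ∑ i, H.loss i (t + 1) * weight (H.c t) (H.R i t) := by
    rw [sum_mul]
    refine sum_congr rfl fun j _ => ?_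
    rw [H.p_succ_eq ht]
    field_simp
  simp_rw [H.R_rec, add_sub_cancel_left, sub_mul, sum_sub_distrib, ← mul_sum, hA, sub_self]

theorem c_le_of_sum_potential_le {t : ℕ} (ht : 1 ≤ t) {c : ℝ} (hc : 0 < c)
    (h : ∑ i, potential c (H.R i t) ≤ N * exp 1) : H.c t ≤ c :=
  ((sum_potential_strictAntiOn (H.exists_regret_pos ht)).le_iff_ge hc (H.c_pos t ht)).1
    (h.trans_eq (H.sum_potential_eq ht).symm)

theorem le_c_of_le_sum_potential {t : ℕ} (ht : 1 ≤ t) {c : ℝ} (hc : 0 < c)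
    (h : N * exp 1 ≤ ∑ i, potential c (H.R i t)) : c ≤ H.c t :=
  ((sum_potential_strictAntiOn (H.exists_regret_pos ht)).le_iff_ge (H.c_pos t ht) hc).1
    ((H.sum_potential_eq ht).trans_le h)

theorem c_le_c_succ {t : ℕ} (ht : 1 ≤ t) : H.c t ≤ H.c (t + 1) := by
  refine H.le_c_of_le_sum_potential (by omega) (H.c_pos t ht) ?_
  calc (N : ℝ) * exp 1
      = ∑ i, potential (H.c t) (H.R i t) +
          ∑ i, (H.R i (t + 1) - H.R i t) * weight (H.c t) (H.R i t) := by
        rw [H.sum_potential_eq ht, H.sum_R_succ_sub_mul_weight ht, add_zero]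
    _ ≤ ∑ i, potential (H.c t) (H.R i (t + 1)) := by
        rw [← sum_add_distrib]
        exact sum_le_sum fun i _ => add_sub_mul_weight_le_potential (H.c_pos t ht) _ _

theorem sum_potential_succ_le {t : ℕ} (ht : 1 ≤ t) {δ : ℝ} (hδ0 : 0 < δ) (hδ1 : δ ≤ 1 / 2)
    (hcL : 16 * log N / δ ^ 2 ≤ H.c t) :
    ∑ i, potential (H.c t) (H.R i (t + 1)) ≤
      N * exp 1 * (1 + exp δ * (3 / 2 + δ + log N) / H.c t) := by
  set c := H.c t
  set K := exp δ * (3 / 2 + δ + log N) / c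
  have hc : 0 < c := H.c_pos t ht
  have hcurv (i : Fin N) : weightDeriv c (max (H.R i t) 0 + 1) / 2 ≤ K * potential c (H.R i t) := by
    have hxL : max (H.R i t) 0 ^ 2 / (2 * c) ≤ 1 + log N := by
      have hle : potential c (H.R i t) ≤ N * exp 1 :=
        (single_le_sum (f := fun j => potential c (H.R j t)) (fun j _ => (exp_pos _).le)
          (mem_univ i)).trans_eq (H.sum_potential_eq ht)
      rwa [← exp_log H.natCast_pos, ← exp_add, potential, exp_le_exp, add_comm] at hle
    exact weightDeriv_add_one_le hc (le_max_right _ _) hxL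
      (two_mul_add_one_le_of_sq_div_le H.log_two_le_log_card hδ0 hδ1 hcL (le_max_right _ _) hxL)
  calc ∑ i, potential c (H.R i (t + 1))
      ≤ ∑ i, (potential c (H.R i t) + (H.R i (t + 1) - H.R i t) * weight c (H.R i t) +
          K * potential c (H.R i t)) := by
        refine sum_le_sum fun i _ => ?_
        linarith [potential_le_of_abs_sub_le_one hc (H.abs_R_succ_sub_le_one ht i), hcurv i]
    _ = (1 + K) * ∑ i, potential c (H.R i t) +
          ∑ i, (H.R i (t + 1) - H.R i t) * weight c (H.R i t) := by
        rw [mul_sum, ← sum_add_distrib]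
        exact sum_congr rfl fun i _ => by ring
    _ = N * exp 1 * (1 + K) := by
        rw [H.sum_potential_eq ht, H.sum_R_succ_sub_mul_weight ht]
        ring

theorem c_succ_le {t : ℕ} (ht : 1 ≤ t) {δ : ℝ} (hδ0 : 0 < δ) (hδ1 : δ ≤ 1 / 2)
    (hcL : 16 * log N / δ ^ 2 ≤ H.c t) :
    H.c (t + 1) ≤ H.c t + exp δ * (3 / 2 + δ + log N) := by
  set c := H.c t
  set K := exp δ * (3 / 2 + δ + log N)
  have hc : 0 < c := H.c_pos t ht
  have hK : 0 ≤ K := by have := H.log_card_nonneg; positivity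
  have hcK : 0 < c + K := by linarith
  refine H.c_le_of_sum_potential_le (by omega) hcK ?_
  -- the potential at scale `c + K` is the one at scale `c` with its exponents shrunk by `θ`
  set θ := c / (c + K) with hθ_def
  have hθ : θ * (1 + K / c) = 1 := by rw [hθ_def]; field_simp
  have hpot (z : ℝ) : potential (c + K) z = exp (θ * (max z 0 ^ 2 / (2 * c))) := by
    unfold potential; rw [hθ_def]; congr 1; field_simp
  simp_rw [hpot]
  have := sum_exp_mul_le_of_mul_sum_exp_le (fun i => max (H.R i (t + 1)) 0 ^ 2 / (2 * c))
    (θ := θ) (by positivity) (div_le_one_of_le₀ (by linarith) hcK.le) (by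
      rw [Fintype.card_fin]
      calc θ * ∑ i, potential c (H.R i (t + 1)) ≤ θ * (N * exp 1 * (1 + K / c)) :=
            mul_le_mul_of_nonneg_left (H.sum_potential_succ_le ht hδ0 hδ1 hcL) (by positivity)
        _ = N * exp 1 := by rw [mul_comm, mul_assoc, mul_comm _ θ, hθ, mul_one])
  rwa [Fintype.card_fin] at this

end NormalHedge

/-- Lemma 5: if at some round `t₀` the scale satisfies `c t₀ ≥ (16 ln N)/δ²` with
`0 < δ ≤ 1/2`, then for every `t ≥ t₀`,
`c (t+1) - c t ≤ e^δ (3/2 + δ + ln N)/(1 - δ² e^δ)`. -/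
theorem normalHedge_scale_increment_bound {N : ℕ} (H : NormalHedge N)
    (t₀ : ℕ) (ht₀ : 1 ≤ t₀) (δ : ℝ) (hδ0 : 0 < δ) (hδ1 : δ ≤ 1 / 2)
    (hc : 16 * Real.log N / δ ^ 2 ≤ H.c t₀)
    (t : ℕ) (ht : t₀ ≤ t) :
    H.c (t + 1) - H.c t ≤
      Real.exp δ * (3 / 2 + δ + Real.log N) / (1 - δ ^ 2 * Real.exp δ) := by
  have hc_mono : MonotoneOn H.c {s | t₀ ≤ s} :=
    monotoneOn_nat_Ici_of_le_succ fun s hs => H.c_le_c_succ (ht₀.trans hs)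
  have hstep := H.c_succ_le (ht₀.trans ht) hδ0 hδ1 (hc.trans (hc_mono (le_refl t₀) ht ht))
  have hnum : 0 ≤ exp δ * (3 / 2 + δ + log N) := by have := H.log_card_nonneg; positivity
  calc H.c (t + 1) - H.c t ≤ exp δ * (3 / 2 + δ + log N) := by linarith
    _ ≤ _ := le_div_self hnum (sub_pos.2 (sq_mul_exp_lt_one hδ0.le hδ1))
      (sub_le_self _ (by positivity))
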